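/- arXiv:2110.06591 — 2 statements merged into one kernel-verified Lean document; each statement's English description precedes it below -/
import Mathlib

section
/- Let (f, φ) be a measurable lens between standard Borel spaces X and Y, let p be a probability measure on X, let s be a probability measure on Y × Y with first marginal f♯p, and let s' be a probability measure on Y × Y whose first marginal equals the second marginal of s. Let p' denote the second marginal of the lifted coupling L(p,s) (so f♯p' equals the first marginal of s'). Then liftings preserve composition: L(p', s') ∘ L(p, s) = L(p, s' ∘ s), where ∘ denotes composition of couplings. -/
/-!
The lifted coupling `L(p, s)` is `p ⊗ₘ K[s⃗]`, where the lifted kernel `K[η]` sends `x` to the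
image of `η (f x)` under `φ (x, ·)`, and the composite `t ∘ s` is `s.fst ⊗ₘ (t⃗ ∘ₖ s⃗)`.
The lens laws `f (φ (x, y)) = y` and `φ (φ (x, y), y') = φ (x, y')` make lifting a functor on
kernels, `K[η'] ∘ₖ K[η] = K[η' ∘ₖ η]`. Both sides of the theorem are therefore `p ⊗ₘ K[s'⃗ ∘ₖ s⃗]`,
once each conditional kernel is replaced by the kernel it agrees with almost everywhere.
-/

open MeasureTheory ProbabilityTheory

/-- The composite `t ∘ s` of couplings: push `q ⊗ (s⃖ ×ₖ t⃗)` onto the outer two coordinates,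
where `q = s.snd` is the middle measure. -/
noncomputable def coupComp {Z : Type*} [MeasurableSpace Z] [StandardBorelSpace Z] [Nonempty Z]
    (t s : Measure (Z × Z)) [IsFiniteMeasure s] [IsFiniteMeasure t] :
    Measure (Z × Z) :=
  (s.snd.compProd ((s.map Prod.swap).condKernel ×ₖ t.condKernel)).map Prod.snd

instance coupComp.instIsFiniteMeasure {Z : Type*} [MeasurableSpace Z] [StandardBorelSpace Z]
    [Nonempty Z] (t s : Measure (Z × Z)) [IsFiniteMeasure s] [IsFiniteMeasure t] :
    IsFiniteMeasure (coupComp t s) := by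
  unfold coupComp; infer_instance

variable {X Y : Type*} [MeasurableSpace X] [StandardBorelSpace X] [Nonempty X]
  [MeasurableSpace Y] [StandardBorelSpace Y] [Nonempty Y]

/-- The lifted coupling `L(p,s)` associated to a (measurable) lens `(f, φ)`: the
composition-product of `p` with the Markov kernel sending `x` to the pushforward of
`s⃗(·| f x)` along `y ↦ φ(x, y)`. -/
noncomputable def liftCoup {f : X → Y} (hf : Measurable f) {φ : X × Y → X}
    (_hφ : Measurable φ) (p : Measure X) [SFinite p]
    (s : Measure (Y × Y)) [IsFiniteMeasure s] : Measure (X × X) :=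
  p.compProd ((Kernel.deterministic (id : X → X) measurable_id ×ₖ
    s.condKernel.comap f hf).map φ)

instance liftCoup.instIsFiniteMeasure {f : X → Y} (hf : Measurable f) {φ : X × Y → X}
    (hφ : Measurable φ) (p : Measure X) [IsFiniteMeasure p]
    (s : Measure (Y × Y)) [IsFiniteMeasure s] :
    IsFiniteMeasure (liftCoup hf hφ p s) := by
  unfold liftCoup; infer_instance

namespace ProbabilityTheory.Kernel

variable {α β γ : Type*} [MeasurableSpace α] [MeasurableSpace β] [MeasurableSpace γ]

lemma comp_ae_eq_comp {μ : Measure α} {κ κ' : Kernel α β} {η η' : Kernel β γ}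
    (hκ : κ =ᵐ[μ] κ') (hη : η =ᵐ[κ' ∘ₘ μ] η') : η ∘ₖ κ =ᵐ[μ] η' ∘ₖ κ' := by
  rw [← Measure.comp_congr hκ] at hη
  filter_upwards [hκ, Measure.ae_ae_of_ae_comp hη] with a hκa hηa
  rw [comp_apply, comp_apply, ← hκa]
  exact Measure.comp_congr hηa

lemma measurable_kernel_snd_section (κ : Kernel β γ) [IsSFiniteKernel κ] {E : Set (α × γ)}
    (hE : MeasurableSet E) : Measurable fun z : α × β ↦ κ z.2 (Prod.mk z.1 ⁻¹' E) :=
  measurable_kernel_prodMk_left (κ := κ.comap Prod.snd measurable_snd)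
    ((measurable_fst.fst.prodMk measurable_snd) hE)

end ProbabilityTheory.Kernel

section CouplingComposition

variable {Z : Type*} [MeasurableSpace Z] [StandardBorelSpace Z] [Nonempty Z]

lemma coupComp_apply (t s : Measure (Z × Z)) [IsFiniteMeasure s] [IsFiniteMeasure t]
    {E : Set (Z × Z)} (hE : MeasurableSet E) :
    coupComp t s E = ∫⁻ z, t.condKernel z.2 (Prod.mk z.1 ⁻¹' E) ∂s := by
  have hswap : s.snd ⊗ₘ (s.map Prod.swap).condKernel = s.map Prod.swap := by
    rw [← Measure.fst_map_swap]
    exact Measure.disintegrate _ _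
  rw [coupComp, Measure.map_apply measurable_snd hE,
    Measure.compProd_apply (measurable_snd hE)]
  have hsection : ∀ y : Z, Prod.mk y ⁻¹' (Prod.snd ⁻¹' E) = E := fun _ ↦ rfl
  simp only [Kernel.prod_apply, hsection, Measure.prod_apply hE]
  have hmeas : Measurable fun w : Z × Z ↦ t.condKernel w.1 (Prod.mk w.2 ⁻¹' E) :=
    (t.condKernel.measurable_kernel_snd_section hE).comp measurable_swap
  rw [← Measure.lintegral_compProd hmeas, hswap, lintegral_map hmeas measurable_swap]
  rfl

lemma coupComp_eq_compProd (t s : Measure (Z × Z)) [IsFiniteMeasure s] [IsFiniteMeasure t] :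
    coupComp t s = s.fst ⊗ₘ (t.condKernel ∘ₖ s.condKernel) := by
  ext E hE
  have hmeas := t.condKernel.measurable_kernel_snd_section hE
  conv_lhs => rw [coupComp_apply t s hE, ← s.disintegrate s.condKernel]
  rw [Measure.lintegral_compProd hmeas, Measure.compProd_apply hE]
  simp_rw [Kernel.comp_apply' _ _ _ (measurable_prodMk_left hE)]

end CouplingComposition

section Lens

variable {α β : Type*} [MeasurableSpace α] [MeasurableSpace β] {f : α → β} (hf : Measurable f)
  {φ : α × β → α} (hφ : Measurable φ)

noncomputable def liftKernel (η : Kernel β β) : Kernel α α :=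
  Kernel.deterministic φ hφ ∘ₖ (Kernel.deterministic id measurable_id ×ₖ η.comap f hf)

instance (η : Kernel β β) [IsMarkovKernel η] : IsMarkovKernel (liftKernel hf hφ η) := by
  unfold liftKernel; infer_instance

lemma liftKernel_apply (η : Kernel β β) [IsSFiniteKernel η] (x : α) :
    liftKernel hf hφ η x = (η (f x)).map fun y ↦ φ (x, y) := by
  rw [liftKernel, Kernel.deterministic_comp_eq_map, Kernel.map_apply _ hφ, Kernel.prod_apply,
    Kernel.deterministic_apply, Kernel.comap_apply, id_eq, Measure.dirac_prod,
    Measure.map_map hφ measurable_prodMk_left]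
  rfl

lemma liftKernel_congr_ae {μ : Measure α} {η η' : Kernel β β} [IsSFiniteKernel η]
    [IsSFiniteKernel η'] (h : η =ᵐ[μ.map f] η') :
    liftKernel hf hφ η =ᵐ[μ] liftKernel hf hφ η' := by
  filter_upwards [ae_of_ae_map hf.aemeasurable h] with x hx
  rw [liftKernel_apply, liftKernel_apply, hx]

lemma liftKernel_apply_lens (hfφ : ∀ x y, f (φ (x, y)) = y)
    (hφφ : ∀ x y y', φ (φ (x, y), y') = φ (x, y')) (η : Kernel β β) [IsSFiniteKernel η]
    (x : α) (y : β) :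
    liftKernel hf hφ η (φ (x, y)) = (η y).map fun y' ↦ φ (x, y') := by
  simp only [liftKernel_apply, hfφ, hφφ]

lemma liftKernel_comp (hfφ : ∀ x y, f (φ (x, y)) = y)
    (hφφ : ∀ x y y', φ (φ (x, y), y') = φ (x, y')) (η η' : Kernel β β) [IsSFiniteKernel η]
    [IsSFiniteKernel η'] :
    liftKernel hf hφ η' ∘ₖ liftKernel hf hφ η = liftKernel hf hφ (η' ∘ₖ η) := by
  ext x E hE
  have hφx : Measurable fun y ↦ φ (x, y) := hφ.comp measurable_prodMk_left
  rw [Kernel.comp_apply' _ _ _ hE, liftKernel_apply,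
    lintegral_map (Kernel.measurable_coe _ hE) hφx, liftKernel_apply, Measure.map_apply hφx hE,
    Kernel.comp_apply' _ _ _ (hφx hE)]
  simp_rw [liftKernel_apply_lens hf hφ hfφ hφφ, Measure.map_apply hφx hE]

end Lens

section LiftedCoupling

variable {α β : Type*} [MeasurableSpace α] [MeasurableSpace β] [StandardBorelSpace β]
  [Nonempty β] {f : α → β} (hf : Measurable f) {φ : α × β → α} (hφ : Measurable φ)
  (p : Measure α) [IsFiniteMeasure p] (s : Measure (β × β)) [IsFiniteMeasure s]

lemma liftCoup_eq_compProd : liftCoup hf hφ p s = p ⊗ₘ liftKernel hf hφ s.condKernel := by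
  rw [liftKernel, Kernel.deterministic_comp_eq_map]
  rfl

lemma fst_liftCoup : (liftCoup hf hφ p s).fst = p := by
  rw [liftCoup_eq_compProd, Measure.fst_compProd]

lemma snd_liftCoup : (liftCoup hf hφ p s).snd = liftKernel hf hφ s.condKernel ∘ₘ p := by
  rw [liftCoup_eq_compProd, Measure.snd_compProd]

lemma condKernel_liftCoup [StandardBorelSpace α] [Nonempty α] :
    (liftCoup hf hφ p s).condKernel =ᵐ[p] liftKernel hf hφ s.condKernel := by
  simp only [liftCoup_eq_compProd]
  exact condKernel_compProd p _

lemma liftCoup_eq_compProd_of_eq {η : Kernel β β} [IsMarkovKernel η] (hs : s = p.map f ⊗ₘ η) :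
    liftCoup hf hφ p s = p ⊗ₘ liftKernel hf hφ η := by
  have hη : s.condKernel =ᵐ[p.map f] η := by
    subst hs
    exact condKernel_compProd _ _
  rw [liftCoup_eq_compProd]
  exact Measure.compProd_congr (liftKernel_congr_ae hf hφ hη)

end LiftedCoupling

theorem liftCoup_comp_general (f : X → Y) (hf : Measurable f)
    (φ : X × Y → X) (hφ : Measurable φ)
    (hlens1 : ∀ (x : X) (y : Y), f (φ (x, y)) = y)
    (hlens3 : ∀ (x : X) (y y' : Y), φ (φ (x, y), y') = φ (x, y'))
    (p : Measure X) [IsProbabilityMeasure p]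
    (s s' : Measure (Y × Y)) [IsProbabilityMeasure s] [IsProbabilityMeasure s']
    (hs : s.fst = p.map f) :
    coupComp (liftCoup hf hφ ((liftCoup hf hφ p s).snd) s') (liftCoup hf hφ p s) =
      liftCoup hf hφ p (coupComp s' s) := by
  calc _ = p ⊗ₘ (liftKernel hf hφ s'.condKernel ∘ₖ liftKernel hf hφ s.condKernel) := by
        rw [coupComp_eq_compProd, fst_liftCoup]
        refine Measure.compProd_congr (Kernel.comp_ae_eq_comp (condKernel_liftCoup ..) ?_)
        rw [← snd_liftCoup hf hφ p s]
        exact condKernel_liftCoup ..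
    _ = p ⊗ₘ liftKernel hf hφ (s'.condKernel ∘ₖ s.condKernel) := by
        rw [liftKernel_comp hf hφ hlens1 hlens3]
    _ = liftCoup hf hφ p (coupComp s' s) := by
        refine (liftCoup_eq_compProd_of_eq hf hφ p _ ?_).symm
        rw [coupComp_eq_compProd, hs]

/-- For a measurable lens `(f, φ)` between standard Borel spaces, liftings of couplings
preserve composition: with `p'` the second marginal of `L(p,s)`,
`L(p', s') ∘ L(p, s) = L(p, s' ∘ s)`. -/
theorem liftCoup_comp (f : X → Y) (hf : Measurable f)
    (φ : X × Y → X) (hφ : Measurable φ)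
    (hlens1 : ∀ (x : X) (y : Y), f (φ (x, y)) = y)
    (hlens2 : ∀ x : X, φ (x, f x) = x)
    (hlens3 : ∀ (x : X) (y y' : Y), φ (φ (x, y), y') = φ (x, y'))
    (p : Measure X) [IsProbabilityMeasure p]
    (s s' : Measure (Y × Y)) [IsProbabilityMeasure s] [IsProbabilityMeasure s']
    (hs : s.fst = p.map f) (hs' : s'.fst = s.snd) :
    coupComp (liftCoup hf hφ ((liftCoup hf hφ p s).snd) s') (liftCoup hf hφ p s) =
      liftCoup hf hφ p (coupComp s' s) :=
  liftCoup_comp_general f hf φ hφ hlens1 hlens3 p s s' hs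
end

section
/- Let X and Y be standard Borel spaces equipped with measurable pq-metrics c_X and c_Y, let k ≥ 1 be an integer, and let (f, φ) be a measurable metric lens from X to Y, i.e. a measurable lens additionally satisfying c_X(x, φ(x,y)) = c_Y(f(x), y) for all x ∈ X, y ∈ Y. Then for every probability measure p on X and every probability measure s on Y × Y with first marginal f♯p, the lifting preserves cost: cost_k(L(p,s)) = cost_k(s). -/
open MeasureTheory ProbabilityTheory ENNReal

/-- The `k`-cost of a measure `s` on `Z × Z`, relative to a cost function `c`:
`cost_k(s) = (∫ c(x,y)^k ds(x,y))^(1/k)`, computed in `[0,∞]`. -/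
noncomputable def cost {Z : Type*} [MeasurableSpace Z] (c : Z × Z → ℝ≥0∞) (k : ℕ)
    (s : Measure (Z × Z)) : ℝ≥0∞ :=
  (∫⁻ z, c z ^ k ∂s) ^ ((k : ℝ)⁻¹)

variable {X Y : Type*} [MeasurableSpace X] [StandardBorelSpace X] [Nonempty X]
  [MeasurableSpace Y] [StandardBorelSpace Y] [Nonempty Y]

/-- For a measurable *metric* lens `(f, φ)` between standard Borel spaces carrying measurable
pq-metrics, the lifting of couplings preserves the `k`-cost: `cost_k(L(p,s)) = cost_k(s)`. -/
theorem cost_liftCoup (cX : X × X → ℝ≥0∞) (cY : Y × Y → ℝ≥0∞)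
    (hcX : Measurable cX) (hcY : Measurable cY)
    (hreflX : ∀ x : X, cX (x, x) = 0)
    (htriX : ∀ x y z : X, cX (x, z) ≤ cX (x, y) + cX (y, z))
    (hreflY : ∀ y : Y, cY (y, y) = 0)
    (htriY : ∀ x y z : Y, cY (x, z) ≤ cY (x, y) + cY (y, z))
    (k : ℕ) (hk : 1 ≤ k)
    (f : X → Y) (hf : Measurable f)
    (φ : X × Y → X) (hφ : Measurable φ)
    (hlens1 : ∀ (x : X) (y : Y), f (φ (x, y)) = y)
    (hlens2 : ∀ x : X, φ (x, f x) = x)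
    (hlens3 : ∀ (x : X) (y y' : Y), φ (φ (x, y), y') = φ (x, y'))
    (hmetric : ∀ (x : X) (y : Y), cX (x, φ (x, y)) = cY (f x, y))
    (p : Measure X) [IsProbabilityMeasure p]
    (s : Measure (Y × Y)) [IsProbabilityMeasure s] (hs : s.fst = p.map f) :
    cost cX k (liftCoup hf hφ p s) = cost cY k s := by
  unfold cost liftCoup
  congr 1
  have hmeasX : Measurable (fun z : X × X => cX z ^ k) := hcX.pow_const k
  have hmeasY : Measurable (fun z : Y × Y => cY z ^ k) := hcY.pow_const k
  rw [Measure.lintegral_compProd hmeasX]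
  have hκ : ∀ x : X,
      ∫⁻ x', cX (x, x') ^ k
        ∂(((Kernel.deterministic (id : X → X) measurable_id ×ₖ
            s.condKernel.comap f hf).map φ) x)
      = ∫⁻ y, cY (f x, y) ^ k ∂(s.condKernel (f x)) := by
    intro x
    have h1 : Measurable (fun x' : X => cX (x, x') ^ k) :=
      (hcX.comp measurable_prodMk_left).pow_const k
    have h2 : Measurable (fun z : X × Y => cX (x, φ z) ^ k) :=
      ((hcX.comp measurable_prodMk_left).comp hφ).pow_const k
    rw [Kernel.lintegral_map _ hφ _ h1, Kernel.lintegral_prod _ _ _ h2]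
    rw [Kernel.deterministic_apply, lintegral_dirac' _ h2.lintegral_prod_right']
    simp only [id_eq, Kernel.comap_apply, hmetric]
  simp only [hκ]
  have hF : Measurable (fun y' : Y => ∫⁻ y, cY (y', y) ^ k ∂(s.condKernel y')) :=
    ((hcY.pow_const k).lintegral_kernel_prod_right')
  calc ∫⁻ x, (fun y' => ∫⁻ y, cY (y', y) ^ k ∂(s.condKernel y')) (f x) ∂p
      = ∫⁻ y', ∫⁻ y, cY (y', y) ^ k ∂(s.condKernel y') ∂(p.map f) :=
        (lintegral_map hF hf).symm
    _ = ∫⁻ y', ∫⁻ y, cY (y', y) ^ k ∂(s.condKernel y') ∂s.fst := by rw [hs]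
    _ = ∫⁻ z, cY z ^ k ∂(s.fst.compProd s.condKernel) :=
        (Measure.lintegral_compProd hmeasY).symm
    _ = ∫⁻ z, cY z ^ k ∂s := by rw [s.disintegrate s.condKernel]
end
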